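/- arXiv:1508.06687 — 2 statements merged into one kernel-verified Lean document; each statement's English description precedes it below -/
import Mathlib

section
/- Let {φ_i}_{i=1}^N be a basis of an N-dimensional Hilbert space H with dual basis {φ_i^*}_{i=1}^N (so ⟨φ_i^*, φ_j⟩ = δ_{ij}), and let P be an orthogonal projection on H of rank M. For any subset I ⊆ {1,...,N}: the set {Pφ_i}_{i∈I} spans P(H) if and only if {(I−P)φ_i^*}_{i∈I^c} is linearly independent. -/
/-!
Let `U = span {φ i | i ∈ I}`. As `P` is symmetric and fixes its range, a vector of `range P` is
orthogonal to `P U` iff it is orthogonal to `U`, so `P U = range P` iff `range P` meets `Uᗮ`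
trivially. Biorthogonality makes `Uᗮ` the span of the linearly independent `ψ j`, `j ∉ I`, and
`range P = ker (1 - P)`; so the condition says that `1 - P` is injective on that span, i.e. that
the vectors `(1 - P) ψ j`, `j ∉ I`, are linearly independent.
-/

open Submodule InnerProductSpace

theorem LinearIndependent.comp_linearMap_iff_disjoint {R M M' ι : Type*} [Ring R]
    [AddCommGroup M] [Module R M] [AddCommGroup M'] [Module R M'] {v : ι → M}
    (hv : LinearIndependent R v) (f : M →ₗ[R] M') :
    LinearIndependent R (f ∘ v) ↔ Disjoint (span R (Set.range v)) (LinearMap.ker f) :=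
  ⟨range_ker_disjoint, hv.map⟩

section InnerProductSpace

variable {𝕜 E : Type*} [RCLike 𝕜] [NormedAddCommGroup E] [InnerProductSpace 𝕜 E]

theorem Submodule.eq_iff_orthogonal_inf_eq_bot {K V : Submodule 𝕜 E} [K.HasOrthogonalProjection]
    (hKV : K ≤ V) : K = V ↔ Kᗮ ⊓ V = ⊥ := by
  refine ⟨?_, fun h => ?_⟩
  · rintro rfl
    exact K.orthogonal_disjoint.symm.eq_bot
  · simpa [h] using sup_orthogonal_inf_of_hasOrthogonalProjection hKV

theorem LinearMap.IsSymmetric.orthogonal_map {T : E →ₗ[𝕜] E} (hT : T.IsSymmetric)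
    (U : Submodule 𝕜 E) : (U.map T)ᗮ = Uᗮ.comap T := by
  ext v
  simp only [mem_orthogonal, mem_comap, mem_map, forall_exists_index, and_imp,
    forall_apply_eq_imp_iff₂, hT _ v]

theorem LinearMap.IsSymmetric.map_eq_range_iff_disjoint_orthogonal {P : E →ₗ[𝕜] E}
    (hP : P.IsSymmetric) (hidem : IsIdempotentElem P) (U : Submodule 𝕜 E) [(U.map P).HasOrthogonalProjection] :
    U.map P = LinearMap.range P ↔ Disjoint Uᗮ (LinearMap.range P) := by
  suffices Uᗮ.comap P ⊓ LinearMap.range P = Uᗮ ⊓ LinearMap.range P by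
    rw [eq_iff_orthogonal_inf_eq_bot (LinearMap.map_le_range), hP.orthogonal_map, this,
      disjoint_iff]
  ext v
  simp only [mem_inf, mem_comap, and_congr_left_iff, IsIdempotentElem.mem_range_iff hidem]
  exact fun hv => by rw [hv]

variable {ι : Type*} [DecidableEq ι]

theorem linearIndependent_of_inner_eq_ite {φ ψ : ι → E}
    (h : ∀ i j, ⟪ψ i, φ j⟫_𝕜 = if i = j then 1 else 0) : LinearIndependent 𝕜 ψ := by
  rw [linearIndependent_iff']
  intro s g hg k hk
  have := congrArg (fun v => ⟪v, φ k⟫_𝕜) hg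
  simpa [sum_inner, inner_smul_left, h, hk] using this

theorem Module.Basis.span_image_compl_eq_orthogonal [Fintype ι] (φ : Module.Basis ι 𝕜 E)
    {ψ : ι → E} (h : ∀ i j, ⟪ψ i, φ j⟫_𝕜 = if i = j then 1 else 0) (s : Finset ι) :
    span 𝕜 (ψ '' ↑sᶜ) = (span 𝕜 (φ '' ↑s))ᗮ := by
  have hφψ : ∀ i j, ⟪φ i, ψ j⟫_𝕜 = if i = j then 1 else 0 := fun i j => by
    rw [← inner_conj_symm, h]; split_ifs <;> simp_all
  refine le_antisymm (IsOrtho.ge ?_) fun v hv => ?_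
  · rw [isOrtho_span]
    rintro _ ⟨i, hi, rfl⟩ _ ⟨j, hj, rfl⟩
    have hij : i ≠ j := by rintro rfl; simp_all
    simp [hφψ, hij]
  · have hv' : ∀ i ∈ s, ⟪φ i, v⟫_𝕜 = 0 := fun i hi =>
      inner_right_of_mem_orthogonal (subset_span (Set.mem_image_of_mem φ hi)) hv
    have hexp : v = ∑ j ∈ sᶜ, ⟪φ j, v⟫_𝕜 • ψ j := by
      refine ext_inner_left_basis φ fun k => ?_
      by_cases hk : k ∈ s <;> simp [inner_sum, inner_smul_right, hφψ, hk, hv']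
    rw [hexp]
    exact sum_mem fun j hj =>
      smul_mem _ _ (subset_span (Set.mem_image_of_mem ψ (by simpa using hj)))

end InnerProductSpace

theorem stmt_5_general {𝕜 : Type*} [RCLike 𝕜] {H : Type*} [NormedAddCommGroup H]
    [InnerProductSpace 𝕜 H] [FiniteDimensional 𝕜 H]
    (N : ℕ)
    (φ : Module.Basis (Fin N) 𝕜 H) (ψ : Fin N → H)
    (hdual : ∀ i j, (inner 𝕜 (ψ i) (φ j) : 𝕜) = if i = j then 1 else 0)
    (P : H →ₗ[𝕜] H) (hsym : P.IsSymmetric) (hidem : P ∘ₗ P = P)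
    (I : Finset (Fin N)) :
    Submodule.span 𝕜 ((fun i => P (φ i)) '' (I : Set (Fin N))) = LinearMap.range P
    ↔ LinearIndependent 𝕜 (fun i : (Iᶜ : Finset (Fin N)) => ψ i - P (ψ i)) := by
  have hspan : span 𝕜 ((fun i => P (φ i)) '' (I : Set (Fin N))) = (span 𝕜 (φ '' I)).map P := by
    rw [map_span, Set.image_image]
  have hψ : LinearIndependent 𝕜 (fun i : (Iᶜ : Finset (Fin N)) => ψ i) :=
    (linearIndependent_of_inner_eq_ite hdual).comp _ Subtype.val_injective
  rw [hspan, hsym.map_eq_range_iff_disjoint_orthogonal hidem,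
    ← φ.span_image_compl_eq_orthogonal hdual, LinearMap.IsIdempotentElem.range_eq_ker hidem]
  have hrange : Set.range (fun i : (Iᶜ : Finset (Fin N)) => ψ i) = ψ '' ↑Iᶜ := by
    ext; simp
  rw [← hrange, ← hψ.comp_linearMap_iff_disjoint]
  rfl

theorem stmt_5 {𝕜 : Type*} [RCLike 𝕜] {H : Type*} [NormedAddCommGroup H]
    [InnerProductSpace 𝕜 H] [FiniteDimensional 𝕜 H]
    (N M : ℕ) (hdim : Module.finrank 𝕜 H = N)
    (φ : Module.Basis (Fin N) 𝕜 H) (ψ : Fin N → H)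
    (hdual : ∀ i j, (inner 𝕜 (ψ i) (φ j) : 𝕜) = if i = j then 1 else 0)
    (P : H →ₗ[𝕜] H) (hsym : P.IsSymmetric) (hidem : P ∘ₗ P = P)
    (hrank : Module.finrank 𝕜 (LinearMap.range P) = M)
    (I : Finset (Fin N)) :
    Submodule.span 𝕜 ((fun i => P (φ i)) '' (I : Set (Fin N))) = LinearMap.range P
    ↔ LinearIndependent 𝕜 (fun i : (Iᶜ : Finset (Fin N)) => ψ i - P (ψ i)) :=
  stmt_5_general N φ ψ hdual P hsym hidem I
end

section
/- Subspaces {W_i}_{i=1}^M of a finite-dimensional complex Hilbert space H allow phase retrieval if and only if for every choice of orthonormal bases {φ_{i,j}}_{j=1}^{J_i} of W_i, the combined family {φ_{i,j}} allows phase retrieval in H. -/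
open Module Submodule Set
open scoped InnerProductSpace

/-! An orthonormal basis of `W i` turns `‖P_i x‖²` into `∑ⱼ |⟨x, φ_{i,j}⟩|²`, which gives one
direction. Conversely, if `u = P_i x` and `v = P_i y` have equal norms, choose an orthonormal
basis of `W i` containing a unit vector along `u - v`: on it the moduli agree, because
`⟨v, u - v⟩ = -conj ⟨u, u - v⟩` when `‖u‖ = ‖v‖`, while `u` and `v` agree on `(u - v)ᗮ`. -/

theorem Module.Basis.span_range_coe_eq {R M ι : Type*} [Semiring R] [AddCommMonoid M]
    [Module R M] {K : Submodule R M} (b : Basis ι R K) :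
    span R (range fun i ↦ (b i : M)) = K := by
  rw [show (fun i ↦ (b i : M)) = K.subtype ∘ b from rfl, range_comp, ← map_span, b.span_eq,
    Submodule.map_top, range_subtype]

section

variable {𝕜 E : Type*} [RCLike 𝕜] [NormedAddCommGroup E] [InnerProductSpace 𝕜 E]

theorem Orthonormal.norm_orthogonalProjectionOnto_sq {ι : Type*} [Fintype ι]
    {K : Submodule 𝕜 E} [K.HasOrthogonalProjection] {φ : ι → E} (hφ : Orthonormal 𝕜 φ)
    (hspan : span 𝕜 (range φ) = K) (x : E) :
    ‖K.orthogonalProjectionOnto x‖ ^ 2 = ∑ j, ‖⟪x, φ j⟫_𝕜‖ ^ 2 := by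
  have hmem (j : ι) : φ j ∈ K := hspan ▸ subset_span (mem_range_self j)
  have hspan' : ⊤ ≤ span 𝕜 (range (Set.codRestrict φ K hmem)) := by
    refine (map_injective_of_injective K.injective_subtype ?_).ge
    rw [map_span, Submodule.map_top, range_subtype, ← range_comp]
    exact hspan
  let b := OrthonormalBasis.mk (hφ.codRestrict K hmem) hspan'
  rw [← b.sum_sq_norm_inner_left]
  simp only [b, inner_orthogonalProjectionOnto_eq_of_mem_right, OrthonormalBasis.coe_mk,
    Set.val_codRestrict_apply]

theorem exists_orthonormalBasis_apply_eq [FiniteDimensional 𝕜 E] {ι : Type*} [Fintype ι]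
    (hι : finrank 𝕜 E = Fintype.card ι) (j₀ : ι) {e : E} (he : ‖e‖ = 1) :
    ∃ b : OrthonormalBasis ι 𝕜 E, b j₀ = e := by
  have he' : Orthonormal 𝕜 (({j₀} : Set ι).domRestrict fun _ ↦ e) :=
    orthonormal_subsingleton_iff.mpr fun _ ↦ he
  obtain ⟨b, hb⟩ := he'.exists_orthonormalBasis_extension_of_card_eq hι
  exact ⟨b, hb j₀ rfl⟩

theorem norm_inner_sub_eq_of_norm_eq {u v : E} (h : ‖u‖ = ‖v‖) :
    ‖⟪u, u - v⟫_𝕜‖ = ‖⟪v, u - v⟫_𝕜‖ := by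
  have : ⟪v, u - v⟫_𝕜 = -(starRingEnd 𝕜) ⟪u, u - v⟫_𝕜 := by
    rw [inner_sub_right, inner_sub_right, map_sub, inner_conj_symm, inner_self_eq_norm_sq_to_K,
      inner_self_eq_norm_sq_to_K, inner_conj_symm, h]
    ring
  rw [this, norm_neg, RCLike.norm_conj]

theorem exists_orthonormalBasis_norm_inner_eq [FiniteDimensional 𝕜 E] {ι : Type*} [Fintype ι]
    (hι : finrank 𝕜 E = Fintype.card ι) {u v : E} (h : ‖u‖ = ‖v‖) :
    ∃ b : OrthonormalBasis ι 𝕜 E, ∀ j, ‖⟪u, b j⟫_𝕜‖ = ‖⟪v, b j⟫_𝕜‖ := by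
  obtain rfl | huv := eq_or_ne u v
  · exact ⟨(stdOrthonormalBasis 𝕜 E).reindex (Fintype.equivFinOfCardEq hι.symm).symm,
      fun _ ↦ rfl⟩
  have huv' : u - v ≠ 0 := sub_ne_zero.mpr huv
  obtain ⟨j₀⟩ : Nonempty ι :=
    Fintype.card_pos_iff.mp <| hι ▸ finrank_pos_iff_exists_ne_zero.mpr ⟨u - v, huv'⟩
  obtain ⟨b, hb⟩ := exists_orthonormalBasis_apply_eq hι j₀ (norm_smul_inv_norm (𝕜 := 𝕜) huv')
  refine ⟨b, fun j ↦ ?_⟩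
  obtain rfl | hj := eq_or_ne j j₀
  · rw [hb, inner_smul_right, inner_smul_right, norm_mul, norm_mul,
      norm_inner_sub_eq_of_norm_eq h]
  · have hw : u - v = (‖u - v‖ : 𝕜) • b j₀ := by
      rw [hb, smul_smul, mul_inv_cancel₀ (by exact_mod_cast norm_ne_zero_iff.mpr huv'),
        one_smul]
    have horth : ⟪u - v, b j⟫_𝕜 = 0 := by
      rw [hw, inner_smul_left, b.inner_eq_zero hj.symm, mul_zero]
    rw [inner_sub_left, sub_eq_zero] at horth
    rw [horth]

end

theorem stmt_11 {H : Type*} [NormedAddCommGroup H]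
    [InnerProductSpace ℂ H] [FiniteDimensional ℂ H]
    (M : ℕ) (W : Fin M → Submodule ℂ H) :
    (∀ x y : H,
      (∀ i, ‖(Submodule.orthogonalProjectionOnto (W i) x : W i)‖ = ‖(Submodule.orthogonalProjectionOnto (W i) y : W i)‖) →
      ∃ c : ℂ, ‖c‖ = 1 ∧ x = c • y)
    ↔ (∀ (J : Fin M → ℕ) (φ : ∀ i, Fin (J i) → H),
        (∀ i j, φ i j ∈ W i) →
        (∀ i, Orthonormal ℂ (φ i)) →
        (∀ i, Submodule.span ℂ (Set.range (φ i)) = W i) →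
        ∀ x y : H, (∀ i j, ‖(inner ℂ x (φ i j) : ℂ)‖ = ‖(inner ℂ y (φ i j) : ℂ)‖) →
          ∃ c : ℂ, ‖c‖ = 1 ∧ x = c • y) := by
  constructor
  · intro hW J φ _ hφ hspan x y hxy
    refine hW x y fun i ↦ ?_
    rw [← sq_eq_sq₀ (norm_nonneg _) (norm_nonneg _),
      (hφ i).norm_orthogonalProjectionOnto_sq (hspan i),
      (hφ i).norm_orthogonalProjectionOnto_sq (hspan i)]
    simp only [hxy]
  · intro hφ x y hxy
    choose b hb using fun i ↦
      exists_orthonormalBasis_norm_inner_eq (Fintype.card_fin (finrank ℂ (W i))).symm (hxy i)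
    refine hφ _ (fun i j ↦ b i j) (fun i j ↦ (b i j).2)
      (fun i ↦ (W i).subtypeₗᵢ.orthonormal_comp_iff.mpr (b i).orthonormal)
      (fun i ↦ (b i).toBasis.span_range_coe_eq) x y fun i j ↦ ?_
    simpa only [inner_orthogonalProjectionOnto_eq_of_mem_right] using hb i j
end
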